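/- (Paths avoiding a small set) Let g, h : ℕ → ℕ with g(n) < h(n) for all n. Let T be a tree containing the empty string such that every τ ∈ T has at least h(|τ|) immediate extensions in T (in particular T has no leaves), and let B be a set of strings that is g-small above the empty string. Then there exists a function f : ℕ → ℕ such that for every n, the string ⟨f(0), …, f(n−1)⟩ belongs to T and does not belong to B. -/

import Mathlib

/-!
Smallness propagates along a greedy path: if `B` is `g`-small above `σ` and `σ` has more than
`g |σ|` immediate extensions in `T`, then `B` is `g`-small above one of them, for otherwise
grafting witnesses of bigness above `g |σ| + 1` of them yields a witness above `σ`. Starting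
from `[]` this gives an infinite path through `T` along which `B` stays small, and a string
above which `B` is small is not in `B`, the chain of its prefixes being a witness.
-/

/-- A tree is a set of strings (finite sequences of naturals) closed under prefixes. -/
def IsTree (T : Set (List ℕ)) : Prop :=
  ∀ σ ∈ T, ∀ τ : List ℕ, τ <+: σ → τ ∈ T

/-- A leaf of `T` is an element of `T` with no immediate extension in `T`. -/
def IsLeaf (T : Set (List ℕ)) (τ : List ℕ) : Prop :=
  τ ∈ T ∧ ∀ a : ℕ, τ ++ [a] ∉ T

/-- A tree `T` is `h`-bushy above `σ`: `σ ∈ T`, every element of `T` is comparable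
with `σ`, and every non-leaf `τ ∈ T` extending `σ` has at least `h |τ|` immediate
extensions in `T`. -/
def BushyAbove (h : ℕ → ℕ) (σ : List ℕ) (T : Set (List ℕ)) : Prop :=
  IsTree T ∧ σ ∈ T ∧
  (∀ τ ∈ T, τ <+: σ ∨ σ <+: τ) ∧
  (∀ τ ∈ T, σ <+: τ → ¬ IsLeaf T τ → (h τ.length : ℕ∞) ≤ {a : ℕ | τ ++ [a] ∈ T}.encard)

/-- `B` is `h`-big above `σ` if there is a finite tree, `h`-bushy above `σ`,
all of whose leaves belong to `B`. -/
def BigAbove (h : ℕ → ℕ) (σ : List ℕ) (B : Set (List ℕ)) : Prop :=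
  ∃ T : Set (List ℕ), T.Finite ∧ BushyAbove h σ T ∧ ∀ τ, IsLeaf T τ → τ ∈ B

/-- `B` is `h`-small above `σ` if it is not `h`-big above `σ`. -/
def SmallAbove (h : ℕ → ℕ) (σ : List ℕ) (B : Set (List ℕ)) : Prop :=
  ¬ BigAbove h σ B

namespace List

variable {α : Type*}

lemma finite_setOf_prefix (τ : List α) : {ρ | ρ <+: τ}.Finite := by
  simpa only [← mem_inits] using τ.inits.finite_toSet

lemma exists_append_singleton_prefix {ρ τ : List α} (h : ρ <+: τ) (hne : ρ ≠ τ) :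
    ∃ b, ρ ++ [b] <+: τ :=
  ⟨_, concat_get_prefix h (h.length_le.lt_of_ne fun hlen => hne (h.eq_of_length hlen))⟩

lemma append_singleton_prefix_unique {σ τ : List α} {a b : α} (ha : σ ++ [a] <+: τ)
    (hb : σ ++ [b] <+: τ) : a = b := by
  have hab : σ ++ [a] = σ ++ [b] := (prefix_or_prefix_of_prefix ha hb).elim
    (fun h => h.eq_of_length (by simp)) (fun h => (h.eq_of_length (by simp)).symm)
  simpa using hab

theorem exists_forall_ofFn_of_forall_exists_append (P : List α → Prop) (h0 : P [])
    (hstep : ∀ σ, P σ → ∃ a, P (σ ++ [a])) :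
    ∃ f : ℕ → α, ∀ n, P (ofFn fun i : Fin n => f i) := by
  choose A hA using hstep
  let path : ℕ → {σ // P σ} := fun n =>
    n.rec ⟨[], h0⟩ fun _ σ => ⟨σ.1 ++ [A σ.1 σ.2], hA σ.1 σ.2⟩
  refine ⟨fun n => A (path n).1 (path n).2, fun n => ?_⟩
  suffices ofFn (fun i : Fin n => A (path i).1 (path i).2) = (path n).1 from this ▸ (path n).2
  induction n with
  | zero => rfl
  | succ n ih =>
    rw [ofFn_succ', concat_eq_append]
    simp only [Fin.val_castSucc, Fin.val_last]
    rw [ih]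

end List

open List

lemma isLeaf_setOf_prefix_iff {ρ τ : List ℕ} : IsLeaf {σ | σ <+: τ} ρ ↔ ρ = τ := by
  constructor
  · rintro ⟨hρτ, hno⟩
    by_contra hne
    obtain ⟨b, hb⟩ := exists_append_singleton_prefix hρτ hne
    exact hno b hb
  · rintro rfl
    exact ⟨prefix_refl ρ, fun a ha => by simpa using ha.length_le⟩

lemma bigAbove_of_mem {g : ℕ → ℕ} {τ : List ℕ} {B : Set (List ℕ)} (hτ : τ ∈ B) :
    BigAbove g τ B := by
  refine ⟨{ρ | ρ <+: τ}, finite_setOf_prefix τ,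
    ⟨fun σ hσ ρ hρ => hρ.trans hσ, prefix_refl τ, fun ρ hρ => Or.inl hρ, ?_⟩, ?_⟩
  · exact fun ρ hρτ hτρ hleaf => (hleaf (isLeaf_setOf_prefix_iff.2 (antisymm hρτ hτρ))).elim
  · exact fun ρ hρ => isLeaf_setOf_prefix_iff.1 hρ ▸ hτ

def graft (σ : List ℕ) (S : Set ℕ) (F : ℕ → Set (List ℕ)) : Set (List ℕ) :=
  {ρ | ρ <+: σ} ∪ {ρ | ∃ a ∈ S, σ ++ [a] <+: ρ ∧ ρ ∈ F a}

section graft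

variable {σ ρ : List ℕ} {S : Set ℕ} {F : ℕ → Set (List ℕ)}

lemma append_singleton_mem_graft_iff {a b : ℕ} (ha : a ∈ S) (hσρ : σ ++ [a] <+: ρ) :
    ρ ++ [b] ∈ graft σ S F ↔ ρ ++ [b] ∈ F a := by
  constructor
  · rintro (hshort | ⟨a', -, hσρ', hmem⟩)
    · have := hshort.length_le
      have := hσρ.length_le
      simp only [length_append, length_singleton] at *
      omega
    · rwa [append_singleton_prefix_unique hσρ' (hσρ.trans (prefix_append ρ [b]))] at hmem
  · exact fun hmem => Or.inr ⟨a, ha, hσρ.trans (prefix_append ρ [b]), hmem⟩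

lemma isTree_graft (hF : ∀ a ∈ S, IsTree (F a)) : IsTree (graft σ S F) := by
  rintro ρ (hρσ | ⟨a, ha, hσρ, hmem⟩) τ hτρ
  · exact Or.inl (hτρ.trans hρσ)
  have hτ : τ ∈ F a := hF a ha ρ hmem τ hτρ
  rcases prefix_or_prefix_of_prefix hτρ hσρ with hτσ | hστ
  · rcases prefix_concat_iff.1 hτσ with rfl | hτσ
    · exact Or.inr ⟨a, ha, prefix_refl _, hτ⟩
    · exact Or.inl hτσ
  · exact Or.inr ⟨a, ha, hστ, hτ⟩

lemma bushyAbove_graft {g : ℕ → ℕ} (hS : (g σ.length : ℕ∞) ≤ S.encard)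
    (hF : ∀ a ∈ S, BushyAbove g (σ ++ [a]) (F a)) : BushyAbove g σ (graft σ S F) := by
  refine ⟨isTree_graft fun a ha => (hF a ha).1, Or.inl (prefix_refl σ), ?_, ?_⟩
  · rintro ρ (hρσ | ⟨a, -, hσρ, -⟩)
    · exact Or.inl hρσ
    · exact Or.inr ((prefix_append σ [a]).trans hσρ)
  · rintro ρ (hρσ | ⟨a, ha, hσρ, hmem⟩) hσρ' hleaf
    · obtain rfl := antisymm hρσ hσρ'
      exact hS.trans <| Set.encard_mono fun a ha => Or.inr ⟨a, ha, prefix_refl _, (hF a ha).2.1⟩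
    · have hext : {b | ρ ++ [b] ∈ graft σ S F} = {b | ρ ++ [b] ∈ F a} :=
        Set.ext fun b => append_singleton_mem_graft_iff ha hσρ
      rw [hext]
      exact (hF a ha).2.2.2 ρ hmem hσρ fun hleafF =>
        hleaf ⟨Or.inr ⟨a, ha, hσρ, hmem⟩, fun b hb => hleafF.2 b ((append_singleton_mem_graft_iff ha hσρ).1 hb)⟩

lemma exists_isLeaf_of_isLeaf_graft (hS : S.Nonempty) (hF : ∀ a ∈ S, σ ++ [a] ∈ F a)
    (hleaf : IsLeaf (graft σ S F) ρ) : ∃ a ∈ S, IsLeaf (F a) ρ := by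
  obtain ⟨hρ, hno⟩ := hleaf
  rcases hρ with hρσ | ⟨a, ha, hσρ, hmem⟩
  · exfalso
    by_cases hne : ρ = σ
    · subst hne
      obtain ⟨a, ha⟩ := hS
      exact hno a (Or.inr ⟨a, ha, prefix_refl _, hF a ha⟩)
    · obtain ⟨b, hb⟩ := exists_append_singleton_prefix hρσ hne
      exact hno b (Or.inl hb)
  · exact ⟨a, ha, hmem, fun b hb => hno b ((append_singleton_mem_graft_iff ha hσρ).2 hb)⟩

end graft

section smallness

variable {g : ℕ → ℕ} {σ : List ℕ} {B : Set (List ℕ)}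

lemma bigAbove_of_forall_bigAbove_append {S : Set ℕ} (hSfin : S.Finite) (hSne : S.Nonempty)
    (hS : (g σ.length : ℕ∞) ≤ S.encard) (hbig : ∀ a ∈ S, BigAbove g (σ ++ [a]) B) :
    BigAbove g σ B := by
  choose! F hFfin hFbushy hFleaf using hbig
  refine ⟨graft σ S F, ?_, bushyAbove_graft hS hFbushy, fun ρ hρ => ?_⟩
  · refine (finite_setOf_prefix σ).union ((hSfin.biUnion hFfin).subset ?_)
    rintro ρ ⟨a, ha, -, hmem⟩
    exact Set.mem_biUnion ha hmem
  · obtain ⟨a, ha, hleaf⟩ := exists_isLeaf_of_isLeaf_graft hSne (fun a ha => (hFbushy a ha).2.1) hρ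
    exact hFleaf a ha ρ hleaf

lemma exists_smallAbove_append {E : Set ℕ} (hE : (g σ.length : ℕ∞) < E.encard)
    (hB : SmallAbove g σ B) : ∃ a ∈ E, SmallAbove g (σ ++ [a]) B := by
  obtain ⟨S, hSE, hS⟩ := Set.exists_subset_encard_eq (Order.add_one_le_of_lt hE)
  by_contra! hbig
  refine hB (bigAbove_of_forall_bigAbove_append ?_ ?_ (hS ▸ le_self_add)
    fun a ha => not_not.1 (hbig a (hSE ha)))
  · exact Set.finite_of_encard_eq_coe (k := g σ.length + 1) (by rw [hS]; norm_cast)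
  · exact Set.encard_pos.1 (hS ▸ by positivity)

end smallness

theorem path_avoiding_small_set_general (g h : ℕ → ℕ) (hgh : ∀ n, g n < h n)
    (T : Set (List ℕ)) (hnil : ([] : List ℕ) ∈ T)
    (hbranch : ∀ τ ∈ T, (h τ.length : ℕ∞) ≤ {a : ℕ | τ ++ [a] ∈ T}.encard)
    (B : Set (List ℕ)) (hB : SmallAbove g [] B) :
    ∃ f : ℕ → ℕ, ∀ n : ℕ,
      List.ofFn (fun i : Fin n => f i) ∈ T ∧ List.ofFn (fun i : Fin n => f i) ∉ B := by
  obtain ⟨f, hf⟩ := exists_forall_ofFn_of_forall_exists_append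
    (fun σ => σ ∈ T ∧ SmallAbove g σ B) ⟨hnil, hB⟩ fun σ ⟨hσT, hσB⟩ => by
      have hmany := (Nat.cast_lt.2 (hgh σ.length)).trans_le (hbranch σ hσT)
      obtain ⟨a, haT, haB⟩ := exists_smallAbove_append hmany hσB
      exact ⟨a, haT, haB⟩
  exact ⟨f, fun n => ⟨(hf n).1, fun hmem => (hf n).2 (bigAbove_of_mem hmem)⟩⟩

/-- Paths avoiding a small set: if every node of `T` of length `i` has at least `h i`
immediate extensions, `g < h` pointwise, and `B` is `g`-small above the empty string,
then there is an infinite path through `T` avoiding `B`. -/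
theorem path_avoiding_small_set (g h : ℕ → ℕ) (hgh : ∀ n, g n < h n)
    (T : Set (List ℕ)) (hTtree : IsTree T) (hnil : ([] : List ℕ) ∈ T)
    (hbranch : ∀ τ ∈ T, (h τ.length : ℕ∞) ≤ {a : ℕ | τ ++ [a] ∈ T}.encard)
    (B : Set (List ℕ)) (hB : SmallAbove g [] B) :
    ∃ f : ℕ → ℕ, ∀ n : ℕ,
      List.ofFn (fun i : Fin n => f i) ∈ T ∧ List.ofFn (fun i : Fin n => f i) ∉ B :=
  path_avoiding_small_set_general g h hgh T hnil hbranch B hB
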